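/- Let ω = α_{N,N,N,N}, A = α_{k,2N−k,N,N}, B = α_{k,N,k,N}, C = α_{2N−k,N,2N−k,N} where α_{n₁,n₂,n₃,n₄} = (π/2)(n₁+n₂)!/(2^{n₁+n₂}√(n₁! n₂! n₃! n₄!)) when n₁+n₂ = n₃+n₄. For k = N−2 and all integers N ≥ 2, the discriminant Δ = 4(A² − (B+C−ω)²) is strictly positive. -/
import Mathlib

noncomputable def crCoeff (n₁ n₂ n₃ n₄ : ℕ) : ℝ :=
  (Real.pi / 2) * (n₁ + n₂).factorial /
    (2 ^ (n₁ + n₂) * Real.sqrt (n₁.factorial * n₂.factorial * n₃.factorial * n₄.factorial))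

lemma sqrt22 (a b : ℝ) (ha : 0 ≤ a) (hb : 0 ≤ b) : Real.sqrt (a * b * a * b) = a * b := by
  rw [show a * b * a * b = (a * b) ^ 2 by ring, Real.sqrt_sq (mul_nonneg ha hb)]

lemma fc2 (m : ℕ) : (((m + 2).factorial : ℝ)) = ((m : ℝ) + 1) * ((m : ℝ) + 2) * (m.factorial : ℝ) := by
  rw [show m + 2 = m + 1 + 1 from rfl, Nat.factorial_succ, Nat.factorial_succ]
  push_cast; ring

lemma fc4 (m : ℕ) : (((m + 4).factorial : ℝ)) =
    ((m : ℝ) + 1) * ((m : ℝ) + 2) * ((m : ℝ) + 3) * ((m : ℝ) + 4) * (m.factorial : ℝ) := by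
  rw [show m + 4 = m + 3 + 1 from rfl, Nat.factorial_succ,
    show m + 3 = m + 2 + 1 from rfl, Nat.factorial_succ,
    show m + 2 = m + 1 + 1 from rfl, Nat.factorial_succ, Nat.factorial_succ]
  push_cast; ring

lemma g2 (m : ℕ) : (((2 * m + 2).factorial : ℝ)) =
    (2 * (m : ℝ) + 1) * (2 * (m : ℝ) + 2) * ((2 * m).factorial : ℝ) := by
  rw [show 2 * m + 2 = 2 * m + 1 + 1 from rfl, Nat.factorial_succ, Nat.factorial_succ]
  push_cast; ring

lemma g4 (m : ℕ) : (((2 * m + 4).factorial : ℝ)) =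
    (2 * (m : ℝ) + 1) * (2 * (m : ℝ) + 2) * (2 * (m : ℝ) + 3) * (2 * (m : ℝ) + 4) *
      ((2 * m).factorial : ℝ) := by
  rw [show 2 * m + 4 = 2 * m + 3 + 1 from rfl, Nat.factorial_succ,
    show 2 * m + 3 = 2 * m + 2 + 1 from rfl, Nat.factorial_succ,
    show 2 * m + 2 = 2 * m + 1 + 1 from rfl, Nat.factorial_succ, Nat.factorial_succ]
  push_cast; ring

lemma g6 (m : ℕ) : (((2 * m + 6).factorial : ℝ)) =
    (2 * (m : ℝ) + 1) * (2 * (m : ℝ) + 2) * (2 * (m : ℝ) + 3) * (2 * (m : ℝ) + 4) *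
      (2 * (m : ℝ) + 5) * (2 * (m : ℝ) + 6) * ((2 * m).factorial : ℝ) := by
  rw [show 2 * m + 6 = 2 * m + 5 + 1 from rfl, Nat.factorial_succ,
    show 2 * m + 5 = 2 * m + 4 + 1 from rfl, Nat.factorial_succ,
    show 2 * m + 4 = 2 * m + 3 + 1 from rfl, Nat.factorial_succ,
    show 2 * m + 3 = 2 * m + 2 + 1 from rfl, Nat.factorial_succ,
    show 2 * m + 2 = 2 * m + 1 + 1 from rfl, Nat.factorial_succ, Nat.factorial_succ]
  push_cast; ring

lemma A_eval (m : ℕ) : crCoeff m (m + 4) (m + 2) (m + 2) =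
    Real.pi / 2 * ((2 * (m : ℝ) + 1) * (2 * (m : ℝ) + 2) * (2 * (m : ℝ) + 3) * (2 * (m : ℝ) + 4) *
        ((2 * m).factorial : ℝ)) /
      (16 * (2 : ℝ) ^ (2 * m) *
        Real.sqrt ((m.factorial : ℝ) *
          (((m : ℝ) + 1) * ((m : ℝ) + 2) * ((m : ℝ) + 3) * ((m : ℝ) + 4) * (m.factorial : ℝ)) *
          (((m : ℝ) + 1) * ((m : ℝ) + 2) * (m.factorial : ℝ)) *
          (((m : ℝ) + 1) * ((m : ℝ) + 2) * (m.factorial : ℝ)))) := by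
  unfold crCoeff
  rw [show m + (m + 4) = 2 * m + 4 by ring, g4, fc4, fc2, pow_add]
  ring

lemma B_eval (m : ℕ) : crCoeff m (m + 2) m (m + 2) =
    Real.pi / 2 * ((2 * (m : ℝ) + 1) * (2 * (m : ℝ) + 2) * ((2 * m).factorial : ℝ)) /
      (4 * (2 : ℝ) ^ (2 * m) *
        ((m.factorial : ℝ) * (((m : ℝ) + 1) * ((m : ℝ) + 2) * (m.factorial : ℝ)))) := by
  unfold crCoeff
  rw [show m + (m + 2) = 2 * m + 2 by ring, g2, fc2, pow_add,
    sqrt22 _ _ (by positivity) (by positivity)]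
  ring

lemma C_eval (m : ℕ) : crCoeff (m + 4) (m + 2) (m + 4) (m + 2) =
    Real.pi / 2 * ((2 * (m : ℝ) + 1) * (2 * (m : ℝ) + 2) * (2 * (m : ℝ) + 3) * (2 * (m : ℝ) + 4) *
        (2 * (m : ℝ) + 5) * (2 * (m : ℝ) + 6) * ((2 * m).factorial : ℝ)) /
      (64 * (2 : ℝ) ^ (2 * m) *
        (((m : ℝ) + 1) * ((m : ℝ) + 2) * ((m : ℝ) + 3) * ((m : ℝ) + 4) * (m.factorial : ℝ) *
          (((m : ℝ) + 1) * ((m : ℝ) + 2) * (m.factorial : ℝ)))) := by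
  unfold crCoeff
  rw [show m + 4 + (m + 2) = 2 * m + 6 by ring, g6, fc4, fc2, pow_add,
    sqrt22 _ _ (by positivity) (by positivity)]
  ring

lemma omega_eval (m : ℕ) : crCoeff (m + 2) (m + 2) (m + 2) (m + 2) =
    Real.pi / 2 * ((2 * (m : ℝ) + 1) * (2 * (m : ℝ) + 2) * (2 * (m : ℝ) + 3) * (2 * (m : ℝ) + 4) *
        ((2 * m).factorial : ℝ)) /
      (16 * (2 : ℝ) ^ (2 * m) * (((m : ℝ) + 1) * ((m : ℝ) + 2) * (m.factorial : ℝ)) ^ 2) := by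
  unfold crCoeff
  rw [show m + 2 + (m + 2) = 2 * m + 4 by ring, g4, fc2, pow_add,
    sqrt22 _ _ (by positivity) (by positivity)]
  ring

lemma main_ineq (p f g T x : ℝ) (hp : 0 < p) (hf : 0 < f) (hg : 0 < g)
    (hT : 0 < T) (hx : 0 ≤ x) :
    0 < 4 * ((p / 2 * ((2 * x + 1) * (2 * x + 2) * (2 * x + 3) * (2 * x + 4) * g) /
        (16 * T * Real.sqrt (f * ((x + 1) * (x + 2) * (x + 3) * (x + 4) * f) *
          ((x + 1) * (x + 2) * f) * ((x + 1) * (x + 2) * f)))) ^ 2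
      - (p / 2 * ((2 * x + 1) * (2 * x + 2) * g) /
          (4 * T * (f * ((x + 1) * (x + 2) * f)))
        + p / 2 * ((2 * x + 1) * (2 * x + 2) * (2 * x + 3) * (2 * x + 4) * (2 * x + 5) *
            (2 * x + 6) * g) /
          (64 * T * ((x + 1) * (x + 2) * (x + 3) * (x + 4) * f * ((x + 1) * (x + 2) * f)))
        - p / 2 * ((2 * x + 1) * (2 * x + 2) * (2 * x + 3) * (2 * x + 4) * g) /
          (16 * T * ((x + 1) * (x + 2) * f) ^ 2)) ^ 2) := by
  have h1 : (0:ℝ) < x + 1 := by linarith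
  have h2 : (0:ℝ) < x + 2 := by linarith
  have h3 : (0:ℝ) < x + 3 := by linarith
  have h4 : (0:ℝ) < x + 4 := by linarith
  have hb1 : (0:ℝ) < 2 * x + 1 := by linarith
  have hb2 : (0:ℝ) < 2 * x + 2 := by linarith
  have hS : (0:ℝ) < f * ((x + 1) * (x + 2) * (x + 3) * (x + 4) * f) *
      ((x + 1) * (x + 2) * f) * ((x + 1) * (x + 2) * f) :=
    mul_pos (mul_pos (mul_pos hf
      (mul_pos (mul_pos (mul_pos (mul_pos h1 h2) h3) h4) hf))
      (mul_pos (mul_pos h1 h2) hf)) (mul_pos (mul_pos h1 h2) hf)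
  have hs2 : Real.sqrt (f * ((x + 1) * (x + 2) * (x + 3) * (x + 4) * f) *
      ((x + 1) * (x + 2) * f) * ((x + 1) * (x + 2) * f)) ^ 2 =
      f * ((x + 1) * (x + 2) * (x + 3) * (x + 4) * f) *
      ((x + 1) * (x + 2) * f) * ((x + 1) * (x + 2) * f) := Real.sq_sqrt hS.le
  have hA2 : (p / 2 * ((2 * x + 1) * (2 * x + 2) * (2 * x + 3) * (2 * x + 4) * g) /
        (16 * T * Real.sqrt (f * ((x + 1) * (x + 2) * (x + 3) * (x + 4) * f) *
          ((x + 1) * (x + 2) * f) * ((x + 1) * (x + 2) * f)))) ^ 2 =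
      (p / 2 * ((2 * x + 1) * (2 * x + 2) * (2 * x + 3) * (2 * x + 4) * g)) ^ 2 /
        ((16 * T) ^ 2 * (f * ((x + 1) * (x + 2) * (x + 3) * (x + 4) * f) *
          ((x + 1) * (x + 2) * f) * ((x + 1) * (x + 2) * f))) := by
    rw [div_pow, mul_pow (16 * T), hs2]
  rw [hA2]
  have hEq : 4 * ((p / 2 * ((2 * x + 1) * (2 * x + 2) * (2 * x + 3) * (2 * x + 4) * g)) ^ 2 /
        ((16 * T) ^ 2 * (f * ((x + 1) * (x + 2) * (x + 3) * (x + 4) * f) *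
          ((x + 1) * (x + 2) * f) * ((x + 1) * (x + 2) * f)))
      - (p / 2 * ((2 * x + 1) * (2 * x + 2) * g) /
          (4 * T * (f * ((x + 1) * (x + 2) * f)))
        + p / 2 * ((2 * x + 1) * (2 * x + 2) * (2 * x + 3) * (2 * x + 4) * (2 * x + 5) *
            (2 * x + 6) * g) /
          (64 * T * ((x + 1) * (x + 2) * (x + 3) * (x + 4) * f * ((x + 1) * (x + 2) * f)))
        - p / 2 * ((2 * x + 1) * (2 * x + 2) * (2 * x + 3) * (2 * x + 4) * g) /
          (16 * T * ((x + 1) * (x + 2) * f) ^ 2)) ^ 2) =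
      p ^ 2 * g ^ 2 * ((2 * x + 1) * (2 * x + 2)) ^ 2 *
        (128 * x ^ 6 + 2496 * x ^ 5 + 17264 * x ^ 4 + 57504 * x ^ 3 + 99248 * x ^ 2 +
          84288 * x + 27072) /
      (4096 * T ^ 2 * f ^ 4 * ((x + 1) * (x + 2)) ^ 4 * ((x + 3) * (x + 4)) ^ 2) := by
    field_simp
    ring
  rw [hEq]
  apply div_pos
  · have hpoly : (0:ℝ) < 128 * x ^ 6 + 2496 * x ^ 5 + 17264 * x ^ 4 + 57504 * x ^ 3 +
        99248 * x ^ 2 + 84288 * x + 27072 := by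
      nlinarith [pow_nonneg hx 2, pow_nonneg hx 3, pow_nonneg hx 4, pow_nonneg hx 5,
        pow_nonneg hx 6]
    exact mul_pos (mul_pos (mul_pos (pow_pos hp 2) (pow_pos hg 2))
      (pow_pos (mul_pos hb1 hb2) 2)) hpoly
  · exact mul_pos (mul_pos (mul_pos (mul_pos (by norm_num) (pow_pos hT 2)) (pow_pos hf 4))
      (pow_pos (mul_pos h1 h2) 4)) (pow_pos (mul_pos h3 h4) 2)

theorem discriminant_pos (N : ℕ) (hN : 2 ≤ N)
    (A B C ω : ℝ)
    (hA : A = crCoeff (N - 2) (N + 2) N N)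
    (hB : B = crCoeff (N - 2) N (N - 2) N)
    (hC : C = crCoeff (N + 2) N (N + 2) N)
    (hω : ω = crCoeff N N N N) :
    0 < 4 * (A ^ 2 - (B + C - ω) ^ 2) := by
  obtain ⟨m, rfl⟩ : ∃ m, N = m + 2 := ⟨N - 2, by omega⟩
  rw [show m + 2 + 2 = m + 4 from rfl] at hA hC
  simp only [Nat.add_sub_cancel] at hA hB
  rw [hA, hB, hC, hω, A_eval, B_eval, C_eval, omega_eval]
  exact main_ineq Real.pi (m.factorial : ℝ) ((2 * m).factorial : ℝ) ((2 : ℝ) ^ (2 * m)) (m : ℝ)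
    Real.pi_pos (by exact_mod_cast m.factorial_pos) (by exact_mod_cast (2 * m).factorial_pos)
    (by positivity) (Nat.cast_nonneg m)
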